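/- For every positive integer n, the sum over k from 0 to 2n of C(2n,k)·|n−k|^3 equals n^2·C(2n,n). -/

import Mathlib

/-!
The partial sums of the signed cubes have the closed form
`∑_{k ≤ j} C(N,k) (N - 2k)³ = (N - j) ((N - 2j)² + 4j) C(N,j)`,
an induction on `j` driven by `(N - j) C(N,j) = (j + 1) C(N,j+1)`.
At `j = N` it shows the full signed sum vanishes, so the sum of absolute cubes is twice
the partial sum up to `N / 2`; for `N = 2n` this is `2 · n · 4n · C(2n,n) = 8 n² C(2n,n)`.
-/

open Finset

namespace Nat

theorem cast_sub_mul_choose (N j : ℕ) :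
    ((N : ℤ) - j) * N.choose j = (j + 1) * N.choose (j + 1) := by
  rcases le_or_gt j N with hj | hj
  · rw [← cast_sub hj]
    norm_cast
    rw [mul_comm, ← choose_succ_right_eq, mul_comm]
  · rw [choose_eq_zero_of_lt hj, choose_eq_zero_of_lt (by omega)]
    simp

theorem sum_range_choose_mul_sub_two_mul_pow_three (N j : ℕ) :
    ∑ k ∈ range (j + 1), (N.choose k : ℤ) * ((N : ℤ) - 2 * k) ^ 3 =
      ((N : ℤ) - j) * (((N : ℤ) - 2 * j) ^ 2 + 4 * j) * N.choose j := by
  induction j with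
  | zero =>
    simp only [zero_add, sum_range_one, Nat.choose_zero_right, Nat.cast_zero, Nat.cast_one]
    ring
  | succ j ih =>
    rw [sum_range_succ, ih]
    push_cast
    linear_combination (((N : ℤ) - 2 * j) ^ 2 + 4 * j) * cast_sub_mul_choose N j

theorem sum_range_choose_mul_sub_two_mul_pow_three_eq_zero (N : ℕ) :
    ∑ k ∈ range (N + 1), (N.choose k : ℤ) * ((N : ℤ) - 2 * k) ^ 3 = 0 := by
  simp [sum_range_choose_mul_sub_two_mul_pow_three]

theorem sum_range_choose_mul_abs_sub_two_mul_pow_three (N : ℕ) :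
    ∑ k ∈ range (N + 1), (N.choose k : ℤ) * |(N : ℤ) - 2 * k| ^ 3 =
      2 * ∑ k ∈ range (N / 2 + 1), (N.choose k : ℤ) * ((N : ℤ) - 2 * k) ^ 3 := by
  have h_abs : ∀ k ∈ range (N + 1), (N.choose k : ℤ) * |(N : ℤ) - 2 * k| ^ 3 =
      2 * (if k ≤ N / 2 then (N.choose k : ℤ) * ((N : ℤ) - 2 * k) ^ 3 else 0) -
        (N.choose k : ℤ) * ((N : ℤ) - 2 * k) ^ 3 := by
    intro k _
    split_ifs with hk
    · rw [abs_of_nonneg (by omega)]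
      ring
    · rw [abs_of_neg (by omega)]
      ring
  have h_filter : (range (N + 1)).filter (· ≤ N / 2) = range (N / 2 + 1) := by
    ext k
    simp only [mem_filter, mem_range]
    omega
  rw [sum_congr rfl h_abs, sum_sub_distrib, ← mul_sum, ← sum_filter, h_filter,
    sum_range_choose_mul_sub_two_mul_pow_three_eq_zero, sub_zero]

end Nat

theorem stmt_1 (n : ℕ) :
    ∑ k ∈ Finset.range (2 * n + 1), (Nat.choose (2 * n) k : ℤ) * |(n : ℤ) - k| ^ 3 =
      n ^ 2 * Nat.choose (2 * n) n := by
  have h_even := Nat.sum_range_choose_mul_abs_sub_two_mul_pow_three (2 * n)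
  rw [Nat.mul_div_cancel_left n two_pos, Nat.sum_range_choose_mul_sub_two_mul_pow_three] at h_even
  have h_scale : ∀ k : ℕ, |((2 * n : ℕ) : ℤ) - 2 * k| ^ 3 = 8 * |(n : ℤ) - k| ^ 3 := by
    intro k
    rw [Nat.cast_mul, Nat.cast_two, ← mul_sub, abs_mul, mul_pow]
    norm_num
  simp_rw [h_scale, mul_left_comm _ (8 : ℤ), ← mul_sum] at h_even
  push_cast at h_even
  refine mul_left_cancel₀ (by norm_num : (8 : ℤ) ≠ 0) ?_
  linear_combination h_even
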